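/- If g is a homogeneous polynomial of degree n that is singular for κ = κ_0 (i.e., g D_i = 0 for all i at κ = κ_0) and g is of isotype τ (so that Σ_i g ω_i = Σ(τ) g where Σ(τ) is the sum of contents of τ), then n + κ_0 ( N(N−1)/2 − Σ(τ) ) = 0. -/

import Mathlib

open MvPolynomial

variable {F : Type*} [Field F] {N : ℕ}

/-- The canonical embedding of polynomials into the field of rational functions. -/
noncomputable def ι (F : Type*) [Field F] (N : ℕ) :
    MvPolynomial (Fin N) F →+* FractionRing (MvPolynomial (Fin N) F) :=
  algebraMap _ _

/-- The divided difference `p ∂_{ij} = (p − p s_{ij})/(x_i − x_j)`, as a rational function. -/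
noncomputable def ddiffK (i j : Fin N) (p : MvPolynomial (Fin N) F) :
    FractionRing (MvPolynomial (Fin N) F) :=
  (ι F N p - ι F N (rename (Equiv.swap i j) p)) / (ι F N (X i) - ι F N (X j))

/-- The Dunkl operator `p D_i = ∂_i p + κ Σ_{j≠i} p ∂_{ij}`, as a rational function. -/
noncomputable def dunklK (κ : F) (i : Fin N) (p : MvPolynomial (Fin N) F) :
    FractionRing (MvPolynomial (Fin N) F) :=
  ι F N (pderiv i p) + ι F N (C κ) * ∑ j ∈ Finset.univ.erase i, ddiffK i j p

/-- The Jucys–Murphy operator on polynomials: `p ω_i = Σ_{j>i} p(x s_{ij})`. -/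
noncomputable def omegaPoly (i : Fin N) (p : MvPolynomial (Fin N) F) :
    MvPolynomial (Fin N) F :=
  ∑ j ∈ Finset.univ.filter (fun j : Fin N => i < j), rename (Equiv.swap i j) p

/-- The sum of the contents `j − i` of the cells of a partition `τ`. -/
def contentSum (L : ℕ) (τ : Fin L → ℕ) : ℤ :=
  ∑ i : Fin L, ∑ j ∈ Finset.range (τ i), ((j : ℤ) - (i : ℤ))

/-! ### Auxiliary lemmas -/

lemma euler_monomial_aux (d : Fin N →₀ ℕ) (c : F) :
    ∑ i : Fin N, X i * pderiv i (monomial d c) = (∑ i : Fin N, d i) • monomial d c := by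
  rw [Finset.sum_smul]
  refine Finset.sum_congr rfl fun i _ => ?_
  rw [pderiv_monomial]
  rcases Nat.eq_zero_or_pos (d i) with h | h
  · simp [h]
  · have hle : Finsupp.single i 1 ≤ d := by
      rwa [Finsupp.single_le_iff]
    have hX : (X i : MvPolynomial (Fin N) F) = monomial (Finsupp.single i 1) 1 := by
      rw [← X_pow_eq_monomial, pow_one]
    rw [hX, monomial_mul, one_mul, add_tsub_cancel_of_le hle, smul_monomial,
      nsmul_eq_mul, mul_comm]

lemma euler_aux {n : ℕ} {g : MvPolynomial (Fin N) F} (hg : g.IsHomogeneous n) :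
    ∑ i : Fin N, X i * pderiv i g = n • g := by
  have h1 : ∑ i : Fin N, X i * pderiv i g
      = ∑ d ∈ g.support, ∑ i : Fin N, X i * pderiv i (monomial d (coeff d g)) := by
    rw [Finset.sum_comm]
    refine Finset.sum_congr rfl fun i _ => ?_
    rw [← Finset.mul_sum, ← map_sum, ← as_sum]
  rw [h1]
  have h2 : ∀ d ∈ g.support, (∑ i : Fin N, d i) = n := by
    intro d hd
    have hw := hg (mem_support_iff.mp hd)
    rw [Finsupp.weight_apply] at hw
    rw [← hw, Finsupp.sum]
    rw [Finset.sum_subset (Finset.subset_univ d.support)]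
    · simp
    · intro x _ hx
      simpa using Finsupp.notMem_support_iff.mp hx
  calc ∑ d ∈ g.support, ∑ i : Fin N, X i * pderiv i (monomial d (coeff d g))
      = ∑ d ∈ g.support, n • monomial d (coeff d g) := by
        refine Finset.sum_congr rfl fun d hd => ?_
        rw [euler_monomial_aux, h2 d hd]
    _ = n • g := by rw [← Finset.smul_sum, ← as_sum]

lemma iota_inj : Function.Injective (ι F N) :=
  IsFractionRing.injective (MvPolynomial (Fin N) F) (FractionRing (MvPolynomial (Fin N) F))

lemma X_sub_ne {i j : Fin N} (hij : i ≠ j) :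
    ι F N (X i) - ι F N (X j) ≠ 0 := by
  rw [sub_ne_zero]
  exact fun hEq => hij (X_injective (iota_inj hEq))

lemma pairA {i j : Fin N} (hij : i ≠ j) (g : MvPolynomial (Fin N) F) :
    ι F N (X i) * ddiffK i j g + ι F N (X j) * ddiffK j i g
      = ι F N g - ι F N (rename (Equiv.swap i j) g) := by
  have hne : ι F N (X i) - ι F N (X j) ≠ 0 := X_sub_ne hij
  have hne' : ι F N (X j) - ι F N (X i) ≠ 0 := X_sub_ne hij.symm
  rw [ddiffK, ddiffK, Equiv.swap_comm j i]
  field_simp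
  ring

lemma sum_offDiag_eq {M : Type*} [AddCommMonoid M] (f : Fin N → Fin N → M) :
    ∑ p ∈ Finset.univ.offDiag, f p.1 p.2 = ∑ i, ∑ j ∈ Finset.univ.erase i, f i j := by
  rw [show (Finset.univ.offDiag : Finset (Fin N × Fin N)) = (Finset.univ ×ˢ Finset.univ).filter
      (fun a : Fin N × Fin N => a.1 ≠ a.2) by ext; simp, Finset.sum_filter, Finset.sum_product]
  refine Finset.sum_congr rfl fun i _ => ?_
  rw [show (Finset.univ.erase i : Finset (Fin N)) = Finset.univ.filter (fun j => i ≠ j) by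
    ext j; simp [ne_comm, eq_comm], Finset.sum_filter]

lemma sum_offDiag_swap {M : Type*} [AddCommMonoid M] (f : Fin N → Fin N → M) :
    ∑ p ∈ Finset.univ.offDiag, f p.1 p.2 = ∑ p ∈ Finset.univ.offDiag, f p.2 p.1 := by
  refine Finset.sum_equiv (Equiv.prodComm (Fin N) (Fin N)) (fun p => ?_) (fun p _ => rfl)
  simp [Finset.mem_offDiag, ne_comm, and_comm]

lemma lower_sum (g : MvPolynomial (Fin N) F) :
    ∑ p ∈ Finset.univ.offDiag.filter (fun p : Fin N × Fin N => p.1 < p.2),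
        rename (Equiv.swap p.1 p.2) g = ∑ i, omegaPoly i g := by
  have h1 : Finset.univ.offDiag.filter (fun p : Fin N × Fin N => p.1 < p.2)
      = (Finset.univ ×ˢ Finset.univ).filter (fun p : Fin N × Fin N => p.1 < p.2) := by
    rw [show (Finset.univ.offDiag : Finset (Fin N × Fin N)) = (Finset.univ ×ˢ Finset.univ).filter
      (fun a : Fin N × Fin N => a.1 ≠ a.2) by ext; simp, Finset.filter_filter]
    exact Finset.filter_congr fun p _ => by
      constructor
      · exact fun h => h.2
      · exact fun h => ⟨ne_of_lt h, h⟩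
  rw [h1, Finset.sum_filter, Finset.sum_product]
  exact Finset.sum_congr rfl fun i _ => by rw [omegaPoly, Finset.sum_filter]

lemma offDiag_rename_sum (g : MvPolynomial (Fin N) F) :
    ∑ p ∈ Finset.univ.offDiag, rename (Equiv.swap p.1 p.2) g
      = 2 • ∑ i, omegaPoly i g := by
  rw [← Finset.sum_filter_add_sum_filter_not Finset.univ.offDiag
    (fun p : Fin N × Fin N => p.1 < p.2)]
  have h2 : ∑ p ∈ Finset.univ.offDiag.filter (fun p : Fin N × Fin N => ¬ p.1 < p.2),
      rename (Equiv.swap p.1 p.2) g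
      = ∑ p ∈ Finset.univ.offDiag.filter (fun p : Fin N × Fin N => p.1 < p.2),
        rename (Equiv.swap p.1 p.2) g := by
    refine Finset.sum_equiv (Equiv.prodComm (Fin N) (Fin N)) (fun p => ?_)
      (fun p _ => by simp [Equiv.swap_comm])
    simp only [Finset.mem_filter, Finset.mem_offDiag, Finset.mem_univ, true_and,
      Equiv.prodComm_apply, Prod.fst_swap, Prod.snd_swap, not_lt]
    constructor
    · rintro ⟨hne, hle⟩; exact ⟨hne.symm, lt_of_le_of_ne hle hne.symm⟩
    · rintro ⟨hne, hlt⟩; exact ⟨hne.symm, le_of_lt hlt⟩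
  rw [h2, lower_sum, two_nsmul]

set_option maxHeartbeats 1000000 in
/-- If `g` is a nonzero homogeneous polynomial of degree `n`, singular for `κ = κ₀`,
and of isotype `τ` (so `Σ_i g ω_i = Σ(τ) g`), then
`n + κ₀ (N(N−1)/2 − Σ(τ)) = 0`. -/
theorem singular_isotype_parameter_relation [CharZero F] (κ₀ : F) (n L : ℕ)
    (τ : Fin L → ℕ) (hτ : ∀ i j : Fin L, i ≤ j → τ j ≤ τ i) (hτN : ∑ i : Fin L, τ i = N)
    (g : MvPolynomial (Fin N) F) (hg0 : g ≠ 0) (hgh : g.IsHomogeneous n)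
    (hsing : ∀ i : Fin N, dunklK κ₀ i g = 0)
    (hiso : ∑ i : Fin N, omegaPoly i g = C ((contentSum L τ : ℤ) : F) * g) :
    (n : F) + κ₀ * (((N * (N - 1) / 2 : ℕ) : F) - ((contentSum L τ : ℤ) : F)) = 0 := by
  classical
  set K := FractionRing (MvPolynomial (Fin N) F)
  set G : K := ι F N g with hG
  set t : F := ((contentSum L τ : ℤ) : F) with ht
  -- the basic identity: ∑ i, x_i · (g D_i) = 0
  have h0 : ∑ i : Fin N, ι F N (X i) * dunklK κ₀ i g = 0 := by
    simp [hsing]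
  -- Euler part
  have hE : ∑ i : Fin N, ι F N (X i) * ι F N (pderiv i g) = (n : K) * G := by
    calc ∑ i : Fin N, ι F N (X i) * ι F N (pderiv i g)
        = ι F N (∑ i : Fin N, X i * pderiv i g) := by rw [map_sum]; simp [map_mul]
      _ = ι F N (n • g) := by rw [euler_aux hgh]
      _ = (n : K) * G := by rw [map_nsmul, nsmul_eq_mul]
  -- the divided-difference part, as a sum over the off-diagonal
  set S : K := ∑ p ∈ Finset.univ.offDiag, ι F N (X p.1) * ddiffK p.1 p.2 g with hSdef
  have hS : ∑ i : Fin N, ι F N (X i) * ∑ j ∈ Finset.univ.erase i, ddiffK i j g = S := by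
    rw [hSdef, sum_offDiag_eq (fun i j => ι F N (X i) * ddiffK i j g)]
    exact Finset.sum_congr rfl fun i _ => Finset.mul_sum _ _ _
  have h0' : (n : K) * G + ι F N (C κ₀) * S = 0 := by
    have h := h0
    simp only [dunklK, mul_add, Finset.sum_add_distrib] at h
    rw [hE] at h
    have : ∑ i : Fin N, ι F N (X i) * (ι F N (C κ₀) * ∑ j ∈ Finset.univ.erase i, ddiffK i j g)
        = ι F N (C κ₀) * S := by
      rw [← hS, Finset.mul_sum]
      exact Finset.sum_congr rfl fun i _ => by ring
    rwa [this] at h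
  -- doubling S
  have h2S : S + S = ((N * N - N : ℕ) : K) * G - 2 * (ι F N (C t) * G) := by
    have hsw : S = ∑ p ∈ Finset.univ.offDiag, ι F N (X p.2) * ddiffK p.2 p.1 g := by
      rw [hSdef]; exact sum_offDiag_swap (fun i j => ι F N (X i) * ddiffK i j g)
    have hsum : S + S
        = ∑ p ∈ Finset.univ.offDiag, (ι F N g - ι F N (rename (Equiv.swap p.1 p.2) g)) := by
      nth_rewrite 2 [hsw]
      rw [hSdef, ← Finset.sum_add_distrib]
      refine Finset.sum_congr rfl fun p hp => ?_
      exact pairA (Finset.mem_offDiag.mp hp).2.2 g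
    have hren : ∑ p ∈ Finset.univ.offDiag, ι F N (rename (Equiv.swap p.1 p.2) g)
        = 2 * (ι F N (C t) * G) := by
      rw [← map_sum, offDiag_rename_sum, hiso, map_nsmul, map_mul, two_nsmul, two_mul, hG]
    have hcard : (Finset.univ.offDiag (α := Fin N)).card = N * N - N := by
      rw [Finset.offDiag_card]
      simp
    rw [hsum, Finset.sum_sub_distrib, hren, Finset.sum_const, hcard, nsmul_eq_mul, hG]
  -- cast arithmetic for N(N-1)/2
  have hNN : (2 : F) * ((N * (N - 1) / 2 : ℕ) : F) = ((N * N - N : ℕ) : F) := by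
    have hdvd : 2 ∣ N * (N - 1) := by
      rcases N with _ | m
      · simp
      · have h : (m + 1) * (m + 1 - 1) = m * (m + 1) := by
          simp [Nat.mul_comm]
        rw [h]
        exact (Nat.even_mul_succ_self m).two_dvd
    have h1 : 2 * (N * (N - 1) / 2) = N * (N - 1) := Nat.mul_div_cancel' hdvd
    have h2 : N * (N - 1) = N * N - N := by rw [Nat.mul_sub, Nat.mul_one]
    rw [← Nat.cast_ofNat, ← Nat.cast_mul, h1, h2]
  -- combine
  set a : F := (n : F) + κ₀ * (((N * (N - 1) / 2 : ℕ) : F) - t) with ha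
  have key : ι F N (C (2 * a)) * G = 0 := by
    have expand : ι F N (C (2 * a))
        = 2 * ((n : K) + ι F N (C κ₀) * (ι F N (C ((N * (N - 1) / 2 : ℕ) : F)) - ι F N (C t))) := by
      rw [ha]
      simp only [map_mul, map_add, map_sub, map_ofNat, map_natCast]
    have h2h : (2 : K) * ι F N (C ((N * (N - 1) / 2 : ℕ) : F)) = ((N * N - N : ℕ) : K) := by
      have : ι F N (C ((2 : F) * ((N * (N - 1) / 2 : ℕ) : F))) = ι F N (C ((N * N - N : ℕ) : F)) := by
        rw [hNN]
      simpa only [map_mul, map_ofNat, map_natCast] using this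
    calc ι F N (C (2 * a)) * G
        = 2 * ((n : K) * G + ι F N (C κ₀) * S)
          + ι F N (C κ₀) * (((N * N - N : ℕ) : K) * G - 2 * (ι F N (C t) * G) - (S + S)) := by
          rw [expand, ← h2h]; ring
      _ = 0 := by rw [h0', h2S]; ring
  have hGne : G ≠ 0 := by
    rw [hG]
    exact fun h => hg0 (iota_inj (by rwa [map_zero]))
  have hC0 : ι F N (C (2 * a)) = 0 := by
    rcases mul_eq_zero.mp key with h | h
    · exact h
    · exact absurd h hGne
  have h2a : (2 : F) * a = 0 := by
    have : (C (2 * a) : MvPolynomial (Fin N) F) = 0 := iota_inj (by rwa [map_zero])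
    exact (MvPolynomial.C_eq_zero).mp this
  have : a = 0 := by
    rcases mul_eq_zero.mp h2a with h | h
    · exact absurd h two_ne_zero
    · exact h
  rw [ha] at this
  exact this
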